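/- Let c > 1 and γ := 1/c. For every positive integer m, there exists a positive integer n with m = ⌊n^c⌋ if and only if ⌊−m^γ⌋ − ⌊−(m+1)^γ⌋ = 1. -/
import Mathlib


/-- For `c > 1` and `γ = 1/c`, a positive integer `m` is of the form `⌊n^c⌋` for some
positive integer `n` if and only if `⌊-m^γ⌋ - ⌊-(m+1)^γ⌋ = 1`. -/
theorem stmt_10 (c : ℝ) (hc : 1 < c) (m : ℕ) (hm : 0 < m) :
    (∃ n : ℕ, 0 < n ∧ (m : ℤ) = ⌊(n : ℝ) ^ c⌋) ↔
      ⌊-(m : ℝ) ^ (1 / c)⌋ - ⌊-((m : ℝ) + 1) ^ (1 / c)⌋ = 1 := by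
  have hc0 : 0 < c := lt_trans one_pos hc
  set γ : ℝ := 1 / c with hγdef
  have hγ0 : 0 < γ := by positivity
  have hγ1 : γ ≤ 1 := by
    rw [hγdef, div_le_one hc0]; exact hc.le
  have hm1 : (1 : ℝ) ≤ (m : ℝ) := by exact_mod_cast hm
  set a : ℝ := (m : ℝ) ^ γ with ha
  set b : ℝ := ((m : ℝ) + 1) ^ γ with hb
  have ha0 : 0 ≤ a := Real.rpow_nonneg (by positivity) _
  have ha1 : 1 ≤ a := Real.one_le_rpow hm1 hγ0.le
  have hac : a ^ c = (m : ℝ) := by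
    rw [ha, hγdef, one_div, Real.rpow_inv_rpow (by positivity) hc0.ne']
  have hbc : b ^ c = (m : ℝ) + 1 := by
    rw [hb, hγdef, one_div, Real.rpow_inv_rpow (by positivity) hc0.ne']
  have hb0 : 0 ≤ b := Real.rpow_nonneg (by positivity) _
  -- subadditivity: b ≤ a + 1
  have hsub : b ≤ a + 1 := by
    have h1 := NNReal.rpow_add_le_add_rpow (m : NNReal) 1 hγ0.le hγ1
    have h2 : ((((m : NNReal) + 1) ^ γ : NNReal) : ℝ) ≤ (((m : NNReal) ^ γ + 1 ^ γ : NNReal) : ℝ) :=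
      NNReal.coe_le_coe.2 h1
    push_cast [NNReal.coe_rpow] at h2
    simpa [hb, ha, Real.one_rpow] using h2
  rw [Int.floor_neg, Int.floor_neg]
  constructor
  · rintro ⟨n, hn, hmn⟩
    have hmle : (m : ℝ) ≤ (n : ℝ) ^ c := by
      have := Int.floor_le ((n : ℝ) ^ c)
      rw [← hmn] at this; exact_mod_cast this
    have hmlt : (n : ℝ) ^ c < (m : ℝ) + 1 := by
      have := Int.lt_floor_add_one ((n : ℝ) ^ c)
      rw [← hmn] at this; exact_mod_cast this
    have han : a ≤ (n : ℝ) := by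
      rw [← Real.rpow_le_rpow_iff ha0 n.cast_nonneg hc0, hac]; exact hmle
    have hnb : (n : ℝ) < b := by
      rw [← Real.rpow_lt_rpow_iff n.cast_nonneg hb0 hc0, hbc]; exact hmlt
    have h3 : ⌈a⌉ ≤ (n : ℤ) := Int.ceil_le.2 (by exact_mod_cast han)
    have h4 : (n : ℤ) < ⌈b⌉ := Int.lt_ceil.2 (by exact_mod_cast hnb)
    have h5 : ⌈b⌉ ≤ ⌈a⌉ + 1 := by
      have := Int.ceil_le_ceil hsub
      simpa using this
    omega
  · intro h
    have hceil1 : (1 : ℤ) ≤ ⌈a⌉ := by exact_mod_cast Int.one_le_ceil_iff.2 (by linarith)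
    refine ⟨⌈a⌉.toNat, by omega, ?_⟩
    have hcast : ((⌈a⌉.toNat : ℕ) : ℝ) = (⌈a⌉ : ℝ) := by
      norm_cast; omega
    have han : a ≤ ((⌈a⌉.toNat : ℕ) : ℝ) := by rw [hcast]; exact Int.le_ceil a
    have hnb : ((⌈a⌉.toNat : ℕ) : ℝ) < b := by
      rw [hcast]
      have hbc1 : (⌈b⌉ : ℝ) < b + 1 := by exact_mod_cast Int.ceil_lt_add_one b
      have : (⌈a⌉ : ℝ) = (⌈b⌉ : ℝ) - 1 := by
        have : ⌈a⌉ = ⌈b⌉ - 1 := by omega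
        exact_mod_cast this
      linarith
    have hmle : (m : ℝ) ≤ ((⌈a⌉.toNat : ℕ) : ℝ) ^ c := by
      rw [← hac]; exact Real.rpow_le_rpow ha0 han hc0.le
    have hmlt : ((⌈a⌉.toNat : ℕ) : ℝ) ^ c < (m : ℝ) + 1 := by
      rw [← hbc]; exact Real.rpow_lt_rpow (by positivity) hnb hc0
    symm
    rw [Int.floor_eq_iff]
    constructor
    · exact_mod_cast hmle
    · push_cast; exact hmlt
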